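/- Let α, y > 0. Then the following four lower bounds hold: S₁(α;y) ≥ 4·e^{−πα(y + 1/(4y))}; S₂(2α;y) ≥ (2/y⁴)·e^{−2πα/y} + 4·(1 − 1/(4y²))²·e^{−2πα(y + 1/(4y))}; S₃(2α;y) ≥ (4y + 1/y)·e^{−2πα(y + 1/(4y))}; S₄(α;y) ≥ (2/y⁵)·e^{−πα/y} + 4·(1 − 1/(4y²))²·(y + 1/(4y))·e^{−πα(y + 1/(4y))}. -/

import Mathlib

/-! Every summand is nonnegative, so each `Sᵢ` is at least its partial sum over a few vectors on
which the form `Q(n, m) = y n² + (m + n/2)²/y` (`quadForm` below) is small: `(±1, 0), (±1, ∓1)`,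
where `Q = y + 1/(4y)`, and, for `S₂` and `S₄`, also `(0, ±1)`, where `Q = 1/y`. The series
converge because `n² + m² ≤ (3/(2y) + 2y) Q(n, m)` and every weight is `O(Qᵏ)`. -/

open Real

/-- `S₁(α;y) = Σ_{(n,m)∈ℤ²} n² e^{−πα(yn² + (m+n/2)²/y)}`. -/
noncomputable def S1 (α y : ℝ) : ℝ :=
  ∑' p : ℤ × ℤ, (p.1 : ℝ) ^ 2 *
    Real.exp (-π * α * (y * (p.1 : ℝ) ^ 2 + ((p.2 : ℝ) + (p.1 : ℝ) / 2) ^ 2 / y))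

/-- `S₂(α;y) = Σ_{(n,m)∈ℤ²} (n² − (m+n/2)²/y²)² e^{−πα(yn² + (m+n/2)²/y)}`. -/
noncomputable def S2 (α y : ℝ) : ℝ :=
  ∑' p : ℤ × ℤ, ((p.1 : ℝ) ^ 2 - ((p.2 : ℝ) + (p.1 : ℝ) / 2) ^ 2 / y ^ 2) ^ 2 *
    Real.exp (-π * α * (y * (p.1 : ℝ) ^ 2 + ((p.2 : ℝ) + (p.1 : ℝ) / 2) ^ 2 / y))

/-- `S₃(α;y) = Σ_{(n,m)∈ℤ²} n²(yn² + (m+n/2)²/y) e^{−πα(yn² + (m+n/2)²/y)}`. -/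
noncomputable def S3 (α y : ℝ) : ℝ :=
  ∑' p : ℤ × ℤ, (p.1 : ℝ) ^ 2 * (y * (p.1 : ℝ) ^ 2 + ((p.2 : ℝ) + (p.1 : ℝ) / 2) ^ 2 / y) *
    Real.exp (-π * α * (y * (p.1 : ℝ) ^ 2 + ((p.2 : ℝ) + (p.1 : ℝ) / 2) ^ 2 / y))

/-- `S₄(α;y) = Σ_{(n,m)∈ℤ²} (n² − (m+n/2)²/y²)²(yn² + (m+n/2)²/y) e^{−πα(yn² + (m+n/2)²/y)}`. -/
noncomputable def S4 (α y : ℝ) : ℝ :=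
  ∑' p : ℤ × ℤ, ((p.1 : ℝ) ^ 2 - ((p.2 : ℝ) + (p.1 : ℝ) / 2) ^ 2 / y ^ 2) ^ 2 *
    (y * (p.1 : ℝ) ^ 2 + ((p.2 : ℝ) + (p.1 : ℝ) / 2) ^ 2 / y) *
    Real.exp (-π * α * (y * (p.1 : ℝ) ^ 2 + ((p.2 : ℝ) + (p.1 : ℝ) / 2) ^ 2 / y))

noncomputable def quadForm (y : ℝ) (p : ℤ × ℤ) : ℝ :=
  y * (p.1 : ℝ) ^ 2 + ((p.2 : ℝ) + (p.1 : ℝ) / 2) ^ 2 / y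

section QuadForm

variable {y : ℝ}

lemma quadForm_nonneg (hy : 0 < y) (p : ℤ × ℤ) : 0 ≤ quadForm y p := by
  unfold quadForm; positivity

lemma sq_fst_le_quadForm_div (hy : 0 < y) (p : ℤ × ℤ) : (p.1 : ℝ) ^ 2 ≤ quadForm y p / y := by
  rw [le_div_iff₀ hy, quadForm]
  nlinarith [div_nonneg (sq_nonneg ((p.2 : ℝ) + (p.1 : ℝ) / 2)) hy.le]

lemma sq_shift_div_sq_le_quadForm_div (hy : 0 < y) (p : ℤ × ℤ) :
    ((p.2 : ℝ) + (p.1 : ℝ) / 2) ^ 2 / y ^ 2 ≤ quadForm y p / y := by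
  rw [quadForm, add_div, pow_two y, ← div_div]
  nlinarith [div_nonneg (mul_nonneg hy.le (sq_nonneg (p.1 : ℝ))) hy.le]

lemma sq_sub_sq_shift_le_quadForm_div_sq (hy : 0 < y) (p : ℤ × ℤ) :
    ((p.1 : ℝ) ^ 2 - ((p.2 : ℝ) + (p.1 : ℝ) / 2) ^ 2 / y ^ 2) ^ 2 ≤ (quadForm y p / y) ^ 2 := by
  have h := abs_sub_le_of_nonneg_of_le (sq_nonneg _) (sq_fst_le_quadForm_div hy p)
    (by positivity) (sq_shift_div_sq_le_quadForm_div hy p)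
  exact sq_le_sq' (abs_le.mp h).1 (abs_le.mp h).2

/-- Writing `m = (m + n/2) - n/2` gives `m² ≤ 2 (m + n/2)² + n²/2`. -/
lemma sq_add_sq_le_quadForm (hy : 0 < y) (p : ℤ × ℤ) :
    (p.1 : ℝ) ^ 2 + (p.2 : ℝ) ^ 2 ≤ (3 / (2 * y) + 2 * y) * quadForm y p := by
  have : (3 / (2 * y) + 2 * y) * quadForm y p =
      3 / 2 * (p.1 : ℝ) ^ 2 + 2 * ((p.2 : ℝ) + (p.1 : ℝ) / 2) ^ 2
        + (3 / 2 * (((p.2 : ℝ) + (p.1 : ℝ) / 2) / y) ^ 2 + 2 * y ^ 2 * (p.1 : ℝ) ^ 2) := by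
    unfold quadForm; field_simp; ring
  rw [this]
  nlinarith [sq_nonneg ((p.2 : ℝ) + (p.1 : ℝ)), sq_nonneg (((p.2 : ℝ) + (p.1 : ℝ) / 2) / y),
    sq_nonneg (y * (p.1 : ℝ))]

end QuadForm

lemma summable_exp_neg_mul_int_sq {c : ℝ} (hc : 0 < c) :
    Summable fun n : ℤ => exp (-c * (n : ℝ) ^ 2) := by
  have := summable_pow_mul_jacobiTheta₂_term_bound 0 (div_pos hc pi_pos) 0
  simp only [pow_zero, one_mul, mul_zero, zero_mul, sub_zero] at this
  convert this using 3 with n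
  field_simp

lemma summable_exp_neg_mul_quadForm {y c : ℝ} (hy : 0 < y) (hc : 0 < c) :
    Summable fun p : ℤ × ℤ => exp (-c * quadForm y p) := by
  have hK : 0 < 3 / (2 * y) + 2 * y := by positivity
  have h1 := summable_exp_neg_mul_int_sq (div_pos hc hK)
  refine (h1.mul_of_nonneg h1 (fun _ => (exp_pos _).le) fun _ => (exp_pos _).le).of_nonneg_of_le
    (fun _ => (exp_pos _).le) fun p => ?_
  have : c / (3 / (2 * y) + 2 * y) * ((p.1 : ℝ) ^ 2 + (p.2 : ℝ) ^ 2) ≤ c * quadForm y p :=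
    calc _ ≤ c / (3 / (2 * y) + 2 * y) * ((3 / (2 * y) + 2 * y) * quadForm y p) := by
          gcongr; exact sq_add_sq_le_quadForm hy p
      _ = c * quadForm y p := by field_simp
  rw [← exp_add, exp_le_exp]
  linarith

lemma pow_le_factorial_div_pow_mul_exp {x c : ℝ} (hx : 0 ≤ x) (hc : 0 < c) (k : ℕ) :
    x ^ k ≤ k.factorial / c ^ k * exp (c * x) := by
  have := Real.pow_div_factorial_le_exp _ (mul_nonneg hc.le hx) k
  rw [div_le_iff₀ (by positivity), mul_pow] at this
  rw [div_mul_eq_mul_div, le_div_iff₀ (by positivity)]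
  linarith

lemma summable_pow_quadForm_mul_exp_neg {y c : ℝ} (hy : 0 < y) (hc : 0 < c) (k : ℕ) :
    Summable fun p : ℤ × ℤ => quadForm y p ^ k * exp (-c * quadForm y p) := by
  refine ((summable_exp_neg_mul_quadForm hy (half_pos hc)).mul_left
    (k.factorial / (c / 2) ^ k)).of_nonneg_of_le
    (fun p => by have := quadForm_nonneg hy p; positivity) fun p => ?_
  calc quadForm y p ^ k * exp (-c * quadForm y p)
      ≤ k.factorial / (c / 2) ^ k * exp (c / 2 * quadForm y p) * exp (-c * quadForm y p) := by
        gcongr; exact pow_le_factorial_div_pow_mul_exp (quadForm_nonneg hy p) (half_pos hc) k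
    _ = k.factorial / (c / 2) ^ k * exp (-(c / 2) * quadForm y p) := by
        rw [mul_assoc, ← exp_add]; ring_nf

lemma summable_mul_exp_neg_quadForm_of_le {y c C : ℝ} {w : ℤ × ℤ → ℝ} (k : ℕ) (hy : 0 < y)
    (hc : 0 < c) (hw₀ : ∀ p, 0 ≤ w p) (hw : ∀ p, w p ≤ C * quadForm y p ^ k) :
    Summable fun p : ℤ × ℤ => w p * exp (-c * quadForm y p) :=
  ((summable_pow_quadForm_mul_exp_neg hy hc k).mul_left C).of_nonneg_of_le
    (fun p => mul_nonneg (hw₀ p) (exp_pos _).le)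
    fun p => by rw [← mul_assoc]; exact mul_le_mul_of_nonneg_right (hw p) (exp_pos _).le

section LowerBounds

variable {β y : ℝ}

theorem S1_lower_bound (hβ : 0 < β) (hy : 0 < y) :
    4 * exp (-π * β * (y + 1 / (4 * y))) ≤ S1 β y := by
  have hsum : Summable fun p : ℤ × ℤ => (p.1 : ℝ) ^ 2 * exp (-π * β * quadForm y p) := by
    simpa only [neg_mul] using summable_mul_exp_neg_quadForm_of_le (C := 1 / y) 1 hy
      (by positivity : 0 < π * β) (fun p => sq_nonneg _)
      fun p => (sq_fst_le_quadForm_div hy p).trans_eq (by ring)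
  calc 4 * exp (-π * β * (y + 1 / (4 * y)))
      = ∑ p ∈ ({(1, 0), (1, -1), (-1, 0), (-1, 1)} : Finset (ℤ × ℤ)),
          (p.1 : ℝ) ^ 2 * exp (-π * β * quadForm y p) := by
        simp +decide only [Finset.sum_insert, Finset.mem_insert, Finset.mem_singleton,
          Finset.sum_singleton, quadForm]
        push_cast; ring_nf
    _ ≤ S1 β y := hsum.sum_le_tsum _ fun p _ => by positivity

theorem S2_lower_bound (hβ : 0 < β) (hy : 0 < y) :
    2 / y ^ 4 * exp (-π * β / y) +
      4 * (1 - 1 / (4 * y ^ 2)) ^ 2 * exp (-π * β * (y + 1 / (4 * y)))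
      ≤ S2 β y := by
  have hsum : Summable fun p : ℤ × ℤ =>
      ((p.1 : ℝ) ^ 2 - ((p.2 : ℝ) + (p.1 : ℝ) / 2) ^ 2 / y ^ 2) ^ 2
        * exp (-π * β * quadForm y p) := by
    simpa only [neg_mul] using summable_mul_exp_neg_quadForm_of_le (C := 1 / y ^ 2) 2 hy
      (by positivity : 0 < π * β) (fun p => sq_nonneg _)
      fun p => (sq_sub_sq_shift_le_quadForm_div_sq hy p).trans_eq (by ring)
  calc _ = ∑ p ∈ ({(0, 1), (0, -1), (1, 0), (1, -1), (-1, 0), (-1, 1)} : Finset (ℤ × ℤ)),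
          ((p.1 : ℝ) ^ 2 - ((p.2 : ℝ) + (p.1 : ℝ) / 2) ^ 2 / y ^ 2) ^ 2
            * exp (-π * β * quadForm y p) := by
        simp +decide only [Finset.sum_insert, Finset.mem_insert, Finset.mem_singleton,
          Finset.sum_singleton, quadForm]
        push_cast; ring_nf
    _ ≤ S2 β y := hsum.sum_le_tsum _ fun p _ => by positivity

theorem S3_lower_bound (hβ : 0 < β) (hy : 0 < y) :
    (4 * y + 1 / y) * exp (-π * β * (y + 1 / (4 * y))) ≤ S3 β y := by
  have hsum : Summable fun p : ℤ × ℤ =>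
      (p.1 : ℝ) ^ 2 * quadForm y p * exp (-π * β * quadForm y p) := by
    simpa only [neg_mul] using summable_mul_exp_neg_quadForm_of_le (C := 1 / y) 2 hy
      (by positivity : 0 < π * β) (fun p => mul_nonneg (sq_nonneg _) (quadForm_nonneg hy p))
      fun p => (mul_le_mul_of_nonneg_right (sq_fst_le_quadForm_div hy p)
        (quadForm_nonneg hy p)).trans_eq (by ring)
  calc _ = ∑ p ∈ ({(1, 0), (1, -1), (-1, 0), (-1, 1)} : Finset (ℤ × ℤ)),
          (p.1 : ℝ) ^ 2 * quadForm y p * exp (-π * β * quadForm y p) := by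
        simp +decide only [Finset.sum_insert, Finset.mem_insert, Finset.mem_singleton,
          Finset.sum_singleton, quadForm]
        push_cast; ring_nf
    _ ≤ S3 β y := hsum.sum_le_tsum _ fun p _ => by have := quadForm_nonneg hy p; positivity

theorem S4_lower_bound (hβ : 0 < β) (hy : 0 < y) :
    2 / y ^ 5 * exp (-π * β / y) +
      4 * (1 - 1 / (4 * y ^ 2)) ^ 2 * (y + 1 / (4 * y)) * exp (-π * β * (y + 1 / (4 * y)))
      ≤ S4 β y := by
  have hsum : Summable fun p : ℤ × ℤ =>
      ((p.1 : ℝ) ^ 2 - ((p.2 : ℝ) + (p.1 : ℝ) / 2) ^ 2 / y ^ 2) ^ 2 * quadForm y p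
        * exp (-π * β * quadForm y p) := by
    simpa only [neg_mul] using summable_mul_exp_neg_quadForm_of_le (C := 1 / y ^ 2) 3 hy
      (by positivity : 0 < π * β) (fun p => mul_nonneg (sq_nonneg _) (quadForm_nonneg hy p))
      fun p => (mul_le_mul_of_nonneg_right (sq_sub_sq_shift_le_quadForm_div_sq hy p)
        (quadForm_nonneg hy p)).trans_eq (by ring)
  calc _ = ∑ p ∈ ({(0, 1), (0, -1), (1, 0), (1, -1), (-1, 0), (-1, 1)} : Finset (ℤ × ℤ)),
          ((p.1 : ℝ) ^ 2 - ((p.2 : ℝ) + (p.1 : ℝ) / 2) ^ 2 / y ^ 2) ^ 2 * quadForm y p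
            * exp (-π * β * quadForm y p) := by
        simp +decide only [Finset.sum_insert, Finset.mem_insert, Finset.mem_singleton,
          Finset.sum_singleton, quadForm]
        push_cast; ring_nf
    _ ≤ S4 β y := hsum.sum_le_tsum _ fun p _ => by have := quadForm_nonneg hy p; positivity

end LowerBounds

/-- lower bound estimates for `S₁, S₂, S₃, S₄`. -/
theorem S_lower_bounds (α y : ℝ) (hα : 0 < α) (hy : 0 < y) :
    S1 α y ≥ 4 * Real.exp (-π * α * (y + 1 / (4 * y))) ∧
    S2 (2 * α) y ≥ 2 / y ^ 4 * Real.exp (-2 * π * α / y) +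
      4 * (1 - 1 / (4 * y ^ 2)) ^ 2 * Real.exp (-2 * π * α * (y + 1 / (4 * y))) ∧
    S3 (2 * α) y ≥ (4 * y + 1 / y) * Real.exp (-2 * π * α * (y + 1 / (4 * y))) ∧
    S4 α y ≥ 2 / y ^ 5 * Real.exp (-π * α / y) +
      4 * (1 - 1 / (4 * y ^ 2)) ^ 2 * (y + 1 / (4 * y)) *
        Real.exp (-π * α * (y + 1 / (4 * y))) := by
  rw [show -2 * π * α = -π * (2 * α) by ring]
  have h2α : 0 < 2 * α := by positivity
  exact ⟨S1_lower_bound hα hy, S2_lower_bound h2α hy, S3_lower_bound h2α hy, S4_lower_bound hα hy⟩
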